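/- Let H₁, K₁, H₂, K₂ be complex Hilbert spaces and let f : S(K(H₁,K₁)) → S(K(H₂,K₂)) be a surjective isometry between the unit spheres of the corresponding spaces of compact operators. Then: (i) for every finite-rank partial isometry e ∈ K(H₁,K₁) of norm one, f(−e) = −f(e); (ii) if e₁, …, e_m are mutually orthogonal rank-one partial isometries in K(H₁,K₁), then f(e₁), …, f(e_m) are mutually orthogonal rank-one partial isometries in K(H₂,K₂) and f(e₁ + ⋯ + e_m) = f(e₁) + ⋯ + f(e_m). -/

import Mathlib

noncomputable section

/-- A partial isometry between Hilbert spaces: `e ∘ e* ∘ e = e`. -/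
def IsPartialIsom {H K : Type*}
    [NormedAddCommGroup H] [InnerProductSpace ℂ H] [CompleteSpace H]
    [NormedAddCommGroup K] [InnerProductSpace ℂ K] [CompleteSpace K]
    (e : H →L[ℂ] K) : Prop :=
  e.comp ((ContinuousLinearMap.adjoint e).comp e) = e

/-- Two operators `a, b` are orthogonal: `a ∘ b* = 0` and `b* ∘ a = 0`. -/
def OrthogonalOps {H K : Type*}
    [NormedAddCommGroup H] [InnerProductSpace ℂ H] [CompleteSpace H]
    [NormedAddCommGroup K] [InnerProductSpace ℂ K] [CompleteSpace K]
    (a b : H →L[ℂ] K) : Prop :=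
  a.comp (ContinuousLinearMap.adjoint b) = 0 ∧ (ContinuousLinearMap.adjoint b).comp a = 0

/-!
Let `S` be the unit sphere of the compact operators. A compact operator attains its norm, so
`x, y ∈ S` are at distance `2` exactly when `x ζ = -y ζ` for some unit vector `ζ`. Hence the
points of `S` antipodal to a rank-one partial isometry `e = ⟪ξ, ·⟫ η` form the face
`{x ∈ S | x ξ = -η}`, and `-e` is the only point of `S` within distance `1` of this whole face:
any other point `-e + b` of the face is more than `1` away from a suitable point `-e + c` of it,
with `c` rank-one. Conversely, a point `v` antipodal to `u` and within `1` of every point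
antipodal to `u` must be a rank-one partial isometry. These descriptions are metric, so `f` maps
rank-one partial isometries to rank-one partial isometries and commutes with `e ↦ -e` on them;
orthogonality of `e₁, e₂` is the metric condition `‖e₁ ± e₂‖ ≤ 1`. The same face argument for the
points antipodal to all of `e₁, …, eₘ` identifies `-(e₁ + ⋯ + eₘ)` metrically, which gives
additivity, and a finite-rank partial isometry is such a sum.
-/

open InnerProductSpace ContinuousLinearMap Module Set

theorem eq_neg_of_norm_sub_eq_two (𝕜 : Type*) {E : Type*} [RCLike 𝕜] [NormedAddCommGroup E]
    [InnerProductSpace 𝕜 E] {a b : E} (ha : ‖a‖ ≤ 1) (hb : ‖b‖ ≤ 1) (h : ‖a - b‖ = 2) :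
    a = -b ∧ ‖b‖ = 1 := by
  have hpar := parallelogram_law_with_norm 𝕜 a b
  have hab : ‖a + b‖ = 0 := by nlinarith [norm_nonneg a, norm_nonneg b, norm_nonneg (a + b)]
  refine ⟨eq_neg_of_add_eq_zero_left (norm_eq_zero.mp hab), le_antisymm hb ?_⟩
  linarith [norm_sub_le a b]

theorem eq_zero_of_norm_sub_le_of_norm_add_le (𝕜 : Type*) {E : Type*} [RCLike 𝕜]
    [NormedAddCommGroup E] [InnerProductSpace 𝕜 E] {p q : E} (hq : ‖q‖ = 1)
    (hsub : ‖p - q‖ ≤ 1) (hadd : ‖p + q‖ ≤ 1) : p = 0 := by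
  have hpar := parallelogram_law_with_norm 𝕜 p q
  exact norm_eq_zero.mp <| by nlinarith [norm_nonneg p, norm_nonneg (p - q), norm_nonneg (p + q)]

section Vectors

variable {𝕜 E : Type*} [RCLike 𝕜] [NormedAddCommGroup E] [InnerProductSpace 𝕜 E]

theorem eq_of_norm_le_one_of_inner_eq_one {a c : E} (ha : ‖a‖ ≤ 1) (hc : ‖c‖ = 1)
    (h : ⟪a, c⟫_𝕜 = 1) : a = c := by
  have hsq := norm_sub_sq (𝕜 := 𝕜) a c
  rw [h, RCLike.one_re, hc] at hsq
  exact sub_eq_zero.mp <| norm_eq_zero.mp <| by nlinarith [norm_nonneg a, norm_nonneg (a - c)]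

variable {ι : Type*} {v : ι → E}

theorem Orthonormal.neg (hv : Orthonormal 𝕜 v) : Orthonormal 𝕜 fun i => -v i :=
  hv.orthonormal_of_forall_eq_or_eq_neg fun _ => Or.inr rfl

variable [Fintype ι]

theorem Orthonormal.norm_sum_smul_sq (hv : Orthonormal 𝕜 v) (c : ι → 𝕜) :
    ‖∑ i, c i • v i‖ ^ 2 = ∑ i, ‖c i‖ ^ 2 := by
  rw [← inner_self_eq_norm_sq (𝕜 := 𝕜), hv.inner_sum]
  simp only [RCLike.conj_mul, map_sum, ← RCLike.ofReal_pow, RCLike.ofReal_re]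

theorem Orthonormal.norm_sub_sum_inner_smul_sq (hv : Orthonormal 𝕜 v) (x : E) :
    ‖x - ∑ i, ⟪v i, x⟫_𝕜 • v i‖ ^ 2 = ‖x‖ ^ 2 - ∑ i, ‖⟪v i, x⟫_𝕜‖ ^ 2 := by
  set q := ∑ i, ⟪v i, x⟫_𝕜 • v i with hq
  have horth : ⟪q, x - q⟫_𝕜 = 0 := by
    simp only [hq, sum_inner, inner_smul_left, inner_sub_right, hv.inner_right_fintype, sub_self]
  have := norm_add_sq_eq_norm_sq_add_norm_sq_of_inner_eq_zero q (x - q) horth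
  rw [add_sub_cancel] at this
  rw [← hv.norm_sum_smul_sq, ← hq]
  linarith

end Vectors

theorem ContinuousLinearMap.norm_sub_eq_two_of_apply_eq_neg {𝕜 E F : Type*} [RCLike 𝕜]
    [NormedAddCommGroup E] [NormedSpace 𝕜 E] [NormedAddCommGroup F] [NormedSpace 𝕜 F]
    {x y : E →L[𝕜] F} (hx : ‖x‖ ≤ 1) (hy : ‖y‖ ≤ 1) {ζ : E} (hζ : ‖ζ‖ = 1) (hyζ : ‖y ζ‖ = 1)
    (h : x ζ = -y ζ) : ‖x - y‖ = 2 := by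
  refine le_antisymm (by linarith [norm_sub_le x y]) ?_
  have := (x - y).unit_le_opNorm ζ hζ.le
  rwa [sub_apply, h, ← neg_add', norm_neg, ← two_smul 𝕜, norm_smul, hyζ, RCLike.norm_two,
    mul_one] at this

section RankOne

variable {𝕜 H K : Type*} [RCLike 𝕜]
  [NormedAddCommGroup H] [InnerProductSpace 𝕜 H] [NormedAddCommGroup K] [InnerProductSpace 𝕜 K]

theorem isCompactOperator_rankOne (η : K) (ξ : H) : IsCompactOperator (rankOne 𝕜 η ξ) := by
  rw [rankOne_def']
  exact (isCompactOperator_of_locallyCompactSpace_dom (innerSL 𝕜 ξ)).clm_comp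
    (toSpanSingleton 𝕜 η)

theorem rankOne_apply_of_norm_eq_one (η : K) {ξ : H} (hξ : ‖ξ‖ = 1) : rankOne 𝕜 η ξ ξ = η := by
  simp [inner_self_eq_norm_sq_to_K, hξ]

theorem rankOne_smul_smul_of_norm_eq_one (η : K) (ξ : H) {c : 𝕜} (hc : ‖c‖ = 1) :
    rankOne 𝕜 (c • η) (c • ξ) = rankOne 𝕜 η ξ := by
  ext x
  simp [smul_smul, RCLike.mul_conj, hc]

theorem finrank_range_rankOne {ξ : H} {η : K} (hξ : ξ ≠ 0) (hη : η ≠ 0) :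
    finrank 𝕜 (LinearMap.range (rankOne 𝕜 η ξ : H →ₗ[𝕜] K)) = 1 :=
  finrank_eq_of_rank_eq (rank_rankOne hη hξ)

theorem inner_eq_zero_of_norm_rankOne_sub_le_of_norm_rankOne_add_le {ξ ξ' : H} {η η' : K}
    (hη : η ≠ 0) (hξ' : ‖ξ'‖ = 1) (hη' : ‖η'‖ = 1)
    (hsub : ‖rankOne 𝕜 η ξ - rankOne 𝕜 η' ξ'‖ ≤ 1) (hadd : ‖rankOne 𝕜 η ξ + rankOne 𝕜 η' ξ'‖ ≤ 1) :
    ⟪ξ, ξ'⟫_𝕜 = 0 := by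
  have hξ'_apply : ∀ a : H →L[𝕜] K, ‖a‖ ≤ 1 → ‖a ξ'‖ ≤ 1 := fun a ha =>
    (a.unit_le_opNorm ξ' hξ'.le).trans ha
  have h := eq_zero_of_norm_sub_le_of_norm_add_le 𝕜 hη'
    (by simpa [rankOne_apply_of_norm_eq_one _ hξ'] using hξ'_apply _ hsub)
    (by simpa [rankOne_apply_of_norm_eq_one _ hξ'] using hξ'_apply _ hadd)
  simpa [hη] using h

variable {ι : Type*} [Fintype ι] {ξ : ι → H} {η : ι → K}

theorem isCompactOperator_sum_rankOne (η : ι → K) (ξ : ι → H) :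
    IsCompactOperator ⇑(∑ i, rankOne 𝕜 (η i) (ξ i)) :=
  (compactOperator (RingHom.id 𝕜) H K).sum_mem fun i _ => isCompactOperator_rankOne (η i) (ξ i)

theorem sum_rankOne_apply_of_orthonormal (hξ : Orthonormal 𝕜 ξ) (j : ι) :
    (∑ i, rankOne 𝕜 (η i) (ξ i)) (ξ j) = η j := by
  classical
  simp [sum_apply, orthonormal_iff_ite.mp hξ, ite_smul]

theorem norm_sub_sum_rankOne_le (hξ : Orthonormal 𝕜 ξ) {x : H →L[𝕜] K} (hx : ‖x‖ ≤ 1)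
    (hxξ : ∀ i, x (ξ i) = η i) : ‖x - ∑ i, rankOne 𝕜 (η i) (ξ i)‖ ≤ 1 := by
  refine opNorm_le_bound _ zero_le_one fun z => ?_
  set q := ∑ i, ⟪ξ i, z⟫_𝕜 • ξ i
  have hz : (x - ∑ i, rankOne 𝕜 (η i) (ξ i)) z = x (z - q) := by
    simp [q, sum_apply, map_sub, map_sum, hxξ]
  have hq : ‖z - q‖ ≤ ‖z‖ := by
    rw [← pow_le_pow_iff_left₀ (norm_nonneg _) (norm_nonneg _) two_ne_zero,
      hξ.norm_sub_sum_inner_smul_sq]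
    linarith [show 0 ≤ ∑ i, ‖⟪ξ i, z⟫_𝕜‖ ^ 2 by positivity]
  rw [hz]
  exact (x.le_of_opNorm_le hx _).trans (by linarith)

theorem exists_norm_eq_one_orthogonal_apply_ne_zero (hξ : Orthonormal 𝕜 ξ) {b : H →L[𝕜] K}
    (hb : b ≠ 0) (hbξ : ∀ i, b (ξ i) = 0) :
    ∃ α : H, ‖α‖ = 1 ∧ (∀ i, ⟪ξ i, α⟫_𝕜 = 0) ∧ b α ≠ 0 := by
  obtain ⟨z, hz⟩ := DFunLike.ne_iff.mp hb
  set α := z - ∑ i, ⟪ξ i, z⟫_𝕜 • ξ i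
  have hbα : b α = b z := by simp [α, map_sub, map_sum, hbξ]
  have hα0 : α ≠ 0 := fun h => hz (by rw [← hbα, h, map_zero, zero_apply])
  refine ⟨(‖α‖⁻¹ : 𝕜) • α, norm_smul_inv_norm hα0, fun i => ?_, ?_⟩
  · simp [α, inner_smul_right, inner_sub_right, hξ.inner_right_fintype]
  · rw [map_smul, hbα]
    exact smul_ne_zero (by simpa using hα0) (by simpa using hz)

end RankOne

section Faces

variable {𝕜 H K : Type*} [RCLike 𝕜]
  [NormedAddCommGroup H] [InnerProductSpace 𝕜 H] [CompleteSpace H]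
  [NormedAddCommGroup K] [InnerProductSpace 𝕜 K] [CompleteSpace K]

theorem ContinuousLinearMap.adjoint_apply_eq_of_apply_eq {x : H →L[𝕜] K} (hx : ‖x‖ ≤ 1)
    {ζ : H} {θ : K} (hζ : ‖ζ‖ = 1) (hθ : ‖θ‖ = 1) (h : x ζ = θ) : adjoint x θ = ζ := by
  refine eq_of_norm_le_one_of_inner_eq_one (𝕜 := 𝕜) ?_ hζ ?_
  · calc ‖adjoint x θ‖ ≤ ‖adjoint x‖ * ‖θ‖ := le_opNorm _ _
      _ ≤ 1 := by rw [LinearIsometryEquiv.norm_map, hθ, mul_one]; exact hx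
  · rw [adjoint_inner_left, h, inner_self_eq_norm_sq_to_K, hθ]
    simp

theorem orthogonal_of_norm_rankOne_sub_le_of_norm_rankOne_add_le {ξ ξ' : H} {η η' : K}
    (hξ : ‖ξ‖ = 1) (hη : ‖η‖ = 1) (hξ' : ‖ξ'‖ = 1) (hη' : ‖η'‖ = 1)
    (hsub : ‖rankOne 𝕜 η ξ - rankOne 𝕜 η' ξ'‖ ≤ 1) (hadd : ‖rankOne 𝕜 η ξ + rankOne 𝕜 η' ξ'‖ ≤ 1) :
    ⟪ξ, ξ'⟫_𝕜 = 0 ∧ ⟪η, η'⟫_𝕜 = 0 := by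
  refine ⟨inner_eq_zero_of_norm_rankOne_sub_le_of_norm_rankOne_add_le
    (by rintro rfl; simp at hη) hξ' hη' hsub hadd,
    inner_eq_zero_of_norm_rankOne_sub_le_of_norm_rankOne_add_le (η := ξ) (η' := ξ')
    (by rintro rfl; simp at hξ) hη' hξ' ?_ ?_⟩
  · rwa [← adjoint_rankOne η ξ, ← adjoint_rankOne η' ξ', ← map_sub, LinearIsometryEquiv.norm_map]
  · rwa [← adjoint_rankOne η ξ, ← adjoint_rankOne η' ξ', ← map_add, LinearIsometryEquiv.norm_map]

variable {ι : Type*} [Fintype ι] {ξ : ι → H} {η : ι → K}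

theorem norm_sum_rankOne_add_le (hξ : Orthonormal 𝕜 ξ) (hη : Orthonormal 𝕜 η) {b : H →L[𝕜] K}
    (hb : ‖b‖ ≤ 1) (hbξ : ∀ i, b (ξ i) = 0) (hbη : ∀ i, adjoint b (η i) = 0) :
    ‖∑ i, rankOne 𝕜 (η i) (ξ i) + b‖ ≤ 1 := by
  refine opNorm_le_bound _ zero_le_one fun x => ?_
  set q := ∑ i, ⟪ξ i, x⟫_𝕜 • ξ i
  have hSx : (∑ i, rankOne 𝕜 (η i) (ξ i)) x = ∑ i, ⟪ξ i, x⟫_𝕜 • η i := by simp [sum_apply]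
  have hbx : ‖b x‖ ^ 2 ≤ ‖x‖ ^ 2 - ∑ i, ‖⟪ξ i, x⟫_𝕜‖ ^ 2 := by
    have : b x = b (x - q) := by simp [q, map_sub, map_sum, hbξ]
    rw [← hξ.norm_sub_sum_inner_smul_sq, this]
    gcongr
    simpa using b.le_of_opNorm_le hb (x - q)
  have horth : ⟪∑ i, ⟪ξ i, x⟫_𝕜 • η i, b x⟫_𝕜 = 0 := by simp [← adjoint_inner_left, hbη]
  have hpyth := norm_add_sq_eq_norm_sq_add_norm_sq_of_inner_eq_zero _ _ horth
  rw [← sq, ← sq, ← sq, hη.norm_sum_smul_sq] at hpyth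
  rw [one_mul, add_apply, hSx, ← pow_le_pow_iff_left₀ (norm_nonneg _) (norm_nonneg _) two_ne_zero,
    hpyth]
  linarith

theorem norm_rankOne_add_rankOne_le {ξ ξ' : H} {η η' : K} (hξ : ‖ξ‖ = 1) (hη : ‖η‖ = 1)
    (hξ' : ‖ξ'‖ = 1) (hη' : ‖η'‖ = 1) (hξξ' : ⟪ξ', ξ⟫_𝕜 = 0) (hηη' : ⟪η', η⟫_𝕜 = 0) :
    ‖rankOne 𝕜 η ξ + rankOne 𝕜 η' ξ'‖ ≤ 1 := by
  simpa using norm_sum_rankOne_add_le (ι := Unit) (ξ := fun _ => ξ) (η := fun _ => η)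
    (by simp [hξ]) (by simp [hη]) (b := rankOne 𝕜 η' ξ') (by simp [hξ', hη'])
    (fun _ => by simp [hξξ']) (fun _ => by simp [hηη'])

theorem exists_isCompactOperator_norm_eq_one_extension (hξ : Orthonormal 𝕜 ξ)
    (hη : Orthonormal 𝕜 η) {α : H} {β : K} (hα : ‖α‖ = 1) (hβ : ‖β‖ = 1)
    (hαξ : ∀ i, ⟪ξ i, α⟫_𝕜 = 0) (hβη : ∀ i, ⟪η i, β⟫_𝕜 = 0) :
    ∃ x : H →L[𝕜] K, IsCompactOperator x ∧ ‖x‖ = 1 ∧ (∀ i, x (ξ i) = η i) ∧ x α = β := by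
  have hcξ i : rankOne 𝕜 β α (ξ i) = 0 := by simp [← inner_conj_symm α, hαξ]
  have hcη i : adjoint (rankOne 𝕜 β α) (η i) = 0 := by simp [← inner_conj_symm β, hβη]
  have hxα : (∑ i, rankOne 𝕜 (η i) (ξ i) + rankOne 𝕜 β α) α = β := by
    simp [sum_apply, hαξ, rankOne_apply_of_norm_eq_one _ hα]
  refine ⟨_, (compactOperator (RingHom.id 𝕜) H K).add_mem (isCompactOperator_sum_rankOne η ξ)
    (isCompactOperator_rankOne β α), le_antisymm ?_ ?_, fun i => ?_, hxα⟩
  · exact norm_sum_rankOne_add_le hξ hη (by simp [hα, hβ]) hcξ hcη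
  · simpa [hxα, hβ] using (∑ i, rankOne 𝕜 (η i) (ξ i) + rankOne 𝕜 β α).unit_le_opNorm α hα.le
  · rw [add_apply, sum_rankOne_apply_of_orthonormal hξ, hcξ, add_zero]

theorem eq_sum_rankOne_of_forall_norm_sub_le (hξ : Orthonormal 𝕜 ξ) (hη : Orthonormal 𝕜 η)
    {x₀ : H →L[𝕜] K} (hx₀ : ‖x₀‖ ≤ 1) (hx₀ξ : ∀ i, x₀ (ξ i) = η i)
    (hcenter : ∀ x : H →L[𝕜] K, IsCompactOperator x → ‖x‖ = 1 → (∀ i, x (ξ i) = η i) →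
      ‖x₀ - x‖ ≤ 1) :
    x₀ = ∑ i, rankOne 𝕜 (η i) (ξ i) := by
  set S := ∑ i, rankOne 𝕜 (η i) (ξ i)
  have hSξ : ∀ i, S (ξ i) = η i := sum_rankOne_apply_of_orthonormal hξ
  have hbξ i : (x₀ - S) (ξ i) = 0 := by rw [sub_apply, hx₀ξ, hSξ, sub_self]
  have hbη i : adjoint (x₀ - S) (η i) = 0 := by
    rw [map_sub, sub_apply, adjoint_apply_eq_of_apply_eq hx₀ (hξ.1 i) (hη.1 i) (hx₀ξ i), map_sum]
    simp [sum_rankOne_apply_of_orthonormal hη]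
  by_contra hne
  obtain ⟨α, hα, hαξ, hwα⟩ :=
    exists_norm_eq_one_orthogonal_apply_ne_zero hξ (sub_ne_zero.mpr hne) hbξ
  set w := (x₀ - S) α
  -- `x` below lies in the face but sends `α` opposite to `w`, so `‖(x₀ - x) α‖ = ‖w‖ + 1`
  set β := -((‖w‖⁻¹ : 𝕜) • w)
  have hβ : ‖β‖ = 1 := by rw [norm_neg, norm_smul_inv_norm hwα]
  have hβη i : ⟪η i, β⟫_𝕜 = 0 := by
    rw [inner_neg_right, inner_smul_right, ← adjoint_inner_left, hbη, inner_zero_left, mul_zero,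
      neg_zero]
  obtain ⟨x, hxc, hx1, hxξ, hxα⟩ :=
    exists_isCompactOperator_norm_eq_one_extension hξ hη hα hβ hαξ hβη
  have hx₀α : x₀ α = w := by simp [w, S, sum_apply, hαξ]
  have heval : (x₀ - x) α = ((1 + ‖w‖⁻¹ : ℝ) : 𝕜) • w := by
    rw [sub_apply, hxα, hx₀α, sub_neg_eq_add, RCLike.ofReal_add, RCLike.ofReal_one, add_smul,
      one_smul, RCLike.ofReal_inv]
  have := ((x₀ - x).unit_le_opNorm α hα.le).trans (hcenter x hxc hx1 hxξ)
  rw [heval, norm_smul, RCLike.norm_ofReal, abs_of_pos (by positivity), add_mul,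
    inv_mul_cancel₀ (norm_ne_zero_iff.mpr hwα), one_mul] at this
  linarith [norm_pos_iff.mpr hwα]

end Faces

section CompactSphere

variable {H K : Type*} [NormedAddCommGroup H] [InnerProductSpace ℂ H]
  [NormedAddCommGroup K] [InnerProductSpace ℂ K]

variable (H K) in
def compactUnitSphere : Set (H →L[ℂ] K) := {x | IsCompactOperator x ∧ ‖x‖ = 1}

theorem neg_mem_compactUnitSphere {x : H →L[ℂ] K} (hx : x ∈ compactUnitSphere H K) :
    -x ∈ compactUnitSphere H K :=
  ⟨(compactOperator (RingHom.id ℂ) H K).neg_mem hx.1, by rw [norm_neg]; exact hx.2⟩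

theorem rankOne_mem_compactUnitSphere {ξ : H} {η : K} (hξ : ‖ξ‖ = 1) (hη : ‖η‖ = 1) :
    rankOne ℂ η ξ ∈ compactUnitSphere H K :=
  ⟨isCompactOperator_rankOne η ξ, by simp [hξ, hη]⟩

variable [CompleteSpace H] [CompleteSpace K]

theorem IsCompactOperator.exists_norm_apply_eq_opNorm {T : H →L[ℂ] K} (hT : IsCompactOperator T)
    (hT0 : T ≠ 0) : ∃ ξ : H, ‖ξ‖ = 1 ∧ ‖T ξ‖ = ‖T‖ := by
  have : Nontrivial H := by
    obtain ⟨x, hx⟩ := DFunLike.ne_iff.mp hT0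
    exact ⟨x, 0, fun h => hx (by simp [h])⟩
  -- the spectral radius of `T* T` is attained in its spectrum, and by the Fredholm alternative
  -- this point of the spectrum is an eigenvalue
  obtain ⟨μ, hμ, hμS⟩ := spectrum.exists_nnnorm_eq_spectralRadius (adjoint T ∘L T)
  rw [(isPositive_adjoint_comp_self T).isSelfAdjoint.spectralRadius_eq_nnnorm,
    ENNReal.coe_inj, ← NNReal.coe_inj, coe_nnnorm, coe_nnnorm, norm_adjoint_comp_self] at hμS
  have hμ0 : μ ≠ 0 := by
    rw [← norm_ne_zero_iff, hμS]
    positivity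
  obtain ⟨v, hv, hv0⟩ := ((IsCompactOperator.hasEigenvalue_iff_mem_spectrum
    (T := adjoint T ∘L T) (hT.clm_comp (adjoint T)) hμ0).mpr hμ).exists_hasEigenvector
  have hTv : (‖T v‖ : ℂ) ^ 2 = μ * (‖v‖ : ℂ) ^ 2 := by
    have := congrArg (inner ℂ v) (End.mem_eigenspace_iff.mp hv)
    rwa [coe_coe, comp_apply, adjoint_inner_right, inner_self_eq_norm_sq_to_K, inner_smul_right,
      inner_self_eq_norm_sq_to_K] at this
  have hnorm : ‖T v‖ = ‖T‖ * ‖v‖ := by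
    have := congrArg norm hTv
    rw [norm_mul, norm_pow, norm_pow, Complex.norm_real, Complex.norm_real, hμS, norm_norm,
      norm_norm] at this
    exact (pow_left_inj₀ (norm_nonneg _) (by positivity) two_ne_zero).mp (this.trans (by ring))
  refine ⟨(‖v‖⁻¹ : ℂ) • v, norm_smul_inv_norm hv0, ?_⟩
  rw [map_smul, norm_smul, hnorm, norm_inv, Complex.norm_real, norm_norm,
    mul_left_comm, inv_mul_cancel₀ (norm_ne_zero_iff.mpr hv0), mul_one]

theorem exists_apply_eq_neg_of_norm_sub_eq_two {x y : H →L[ℂ] K} (hx : IsCompactOperator x)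
    (hy : IsCompactOperator y) (hx1 : ‖x‖ ≤ 1) (hy1 : ‖y‖ ≤ 1) (h : ‖x - y‖ = 2) :
    ∃ ζ : H, ‖ζ‖ = 1 ∧ ‖y ζ‖ = 1 ∧ x ζ = -y ζ := by
  have hxy : IsCompactOperator ⇑(x - y) := (compactOperator (RingHom.id ℂ) H K).sub_mem hx hy
  obtain ⟨ζ, hζ, hxyζ⟩ := hxy.exists_norm_apply_eq_opNorm fun h0 => by simp [h0] at h
  obtain ⟨hneg, hyζ⟩ := eq_neg_of_norm_sub_eq_two ℂ ((x.unit_le_opNorm ζ hζ.le).trans hx1)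
    ((y.unit_le_opNorm ζ hζ.le).trans hy1) (by rw [← sub_apply, hxyζ, h])
  exact ⟨ζ, hζ, hyζ, hneg⟩

theorem norm_sub_rankOne_eq_two_iff {ξ : H} {η : K} (hξ : ‖ξ‖ = 1) (hη : ‖η‖ = 1)
    {x : H →L[ℂ] K} (hx : IsCompactOperator x) (hx1 : ‖x‖ ≤ 1) :
    ‖x - rankOne ℂ η ξ‖ = 2 ↔ x ξ = -η := by
  have he : ‖rankOne ℂ η ξ‖ ≤ 1 := by simp [hξ, hη]
  have heξ := rankOne_apply_of_norm_eq_one (𝕜 := ℂ) η hξ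
  refine ⟨fun h => ?_, fun h => norm_sub_eq_two_of_apply_eq_neg hx1 he hξ (by rw [heξ, hη])
    (by rw [h, heξ])⟩
  obtain ⟨ζ, hζ, heζ, hxζ⟩ :=
    exists_apply_eq_neg_of_norm_sub_eq_two hx (isCompactOperator_rankOne η ξ) hx1 he h
  -- equality in Cauchy–Schwarz: `ζ` is a unimodular multiple of `ξ`
  have : ‖⟪ξ, ζ⟫_ℂ‖ = ‖ξ‖ * ‖ζ‖ := by simpa [norm_smul, hη, hξ, hζ] using heζ
  obtain ⟨c, hc, rfl⟩ := (norm_inner_eq_norm_iff (by rintro rfl; simp at hξ)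
    (by rintro rfl; simp at hζ)).mp this
  rw [map_smul, rankOne_apply, inner_smul_right, inner_self_eq_norm_sq_to_K, hξ, ← smul_neg]
    at hxζ
  exact smul_right_injective K hc (by simpa using hxζ)

theorem sum_rankOne_mem_compactUnitSphere {ι : Type*} [Fintype ι] [Nonempty ι] {ξ : ι → H}
    {η : ι → K} (hξ : Orthonormal ℂ ξ) (hη : Orthonormal ℂ η) :
    ∑ i, rankOne ℂ (η i) (ξ i) ∈ compactUnitSphere H K := by
  refine ⟨isCompactOperator_sum_rankOne η ξ, le_antisymm ?_ ?_⟩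
  · simpa using norm_sum_rankOne_add_le hξ hη (b := 0) (by simp) (by simp) (by simp)
  · obtain ⟨i⟩ := ‹Nonempty ι›
    simpa [sum_rankOne_apply_of_orthonormal hξ, hη.1 i] using
      (∑ i, rankOne ℂ (η i) (ξ i)).unit_le_opNorm (ξ i) (hξ.1 i).le

theorem norm_neg_rankOne_sub_le_of_norm_sub_eq_two {ξ : H} {η : K} (hξ : ‖ξ‖ = 1)
    (hη : ‖η‖ = 1) {x : H →L[ℂ] K} (hx : x ∈ compactUnitSphere H K)
    (h : ‖x - rankOne ℂ η ξ‖ = 2) : ‖-rankOne ℂ η ξ - x‖ ≤ 1 := by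
  have := norm_sub_sum_rankOne_le (ι := Unit) (ξ := fun _ => ξ) (η := fun _ => -η)
    (by simp [hξ]) hx.2.le fun _ => (norm_sub_rankOne_eq_two_iff hξ hη hx.1 hx.2.le).mp h
  rw [← norm_neg, neg_sub]
  simpa using this

theorem exists_eq_rankOne_of_forall_norm_sub_le {u v : H →L[ℂ] K}
    (hu : u ∈ compactUnitSphere H K) (hv : v ∈ compactUnitSphere H K) (huv : ‖u - v‖ = 2)
    (hcenter : ∀ w ∈ compactUnitSphere H K, ‖w - u‖ = 2 → ‖v - w‖ ≤ 1) :
    ∃ (ζ : H) (θ : K), ‖ζ‖ = 1 ∧ ‖θ‖ = 1 ∧ u ζ = -θ ∧ v = rankOne ℂ θ ζ := by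
  obtain ⟨ζ, hζ, hvζ, huζ⟩ := exists_apply_eq_neg_of_norm_sub_eq_two hu.1 hv.1 hu.2.le hv.2.le huv
  refine ⟨ζ, v ζ, hζ, hvζ, huζ, ?_⟩
  -- every point of the face `{x | x ζ = v ζ}` is antipodal to `u`, so `v` is its centre
  simpa using eq_sum_rankOne_of_forall_norm_sub_le (ι := Unit) (ξ := fun _ => ζ)
    (η := fun _ => v ζ) (by simp [hζ]) (by simp [hvζ]) hv.2.le (fun _ => rfl)
    fun x hx hx1 hxζ => hcenter x ⟨hx, hx1⟩ <| norm_sub_eq_two_of_apply_eq_neg hx1.le hu.2.le hζ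
      (by rw [huζ, norm_neg, hvζ]) (by rw [hxζ (), huζ, neg_neg])

theorem eq_neg_of_forall_norm_sub_le {u v : H →L[ℂ] K} (hu : u ∈ compactUnitSphere H K)
    (hv : v ∈ compactUnitSphere H K) (huv : ‖u - v‖ = 2)
    (hvu : ∀ w ∈ compactUnitSphere H K, ‖w - u‖ = 2 → ‖v - w‖ ≤ 1)
    (huv' : ∀ w ∈ compactUnitSphere H K, ‖w - v‖ = 2 → ‖u - w‖ ≤ 1) :
    (∃ (ζ : H) (θ : K), ‖ζ‖ = 1 ∧ ‖θ‖ = 1 ∧ v = rankOne ℂ θ ζ) ∧ u = -v := by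
  obtain ⟨ζ, θ, hζ, hθ, -, rfl⟩ := exists_eq_rankOne_of_forall_norm_sub_le hu hv huv hvu
  obtain ⟨ζ', θ', hζ', hθ', hvζ', rfl⟩ :=
    exists_eq_rankOne_of_forall_norm_sub_le hv hu (by rwa [norm_sub_rev]) huv'
  refine ⟨⟨ζ, θ, hζ, hθ, rfl⟩, ?_⟩
  rw [rankOne_apply] at hvζ'
  have : ‖⟪ζ, ζ'⟫_ℂ‖ = ‖ζ‖ * ‖ζ'‖ := by
    simpa [norm_smul, hθ, hθ', hζ, hζ'] using congrArg norm hvζ'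
  obtain ⟨c, -, rfl⟩ := (norm_inner_eq_norm_iff (by rintro rfl; simp at hζ)
    (by rintro rfl; simp at hζ')).mp this
  have hc : ‖c‖ = 1 := by simpa [norm_smul, hζ] using hζ'
  have hθ'' : θ' = -(c • θ) := by
    rw [neg_eq_iff_eq_neg.mp hvζ'.symm, inner_smul_right, inner_self_eq_norm_sq_to_K, hζ]
    simp
  rw [hθ'', map_neg, neg_apply, rankOne_smul_smul_of_norm_eq_one _ _ hc]

end CompactSphere

section SphereIsometry

variable {H₁ K₁ H₂ K₂ : Type*}
  [NormedAddCommGroup H₁] [InnerProductSpace ℂ H₁] [NormedAddCommGroup K₁] [InnerProductSpace ℂ K₁]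
  [NormedAddCommGroup H₂] [InnerProductSpace ℂ H₂] [NormedAddCommGroup K₂] [InnerProductSpace ℂ K₂]

structure IsSphereIsometry (f : (H₁ →L[ℂ] K₁) → (H₂ →L[ℂ] K₂)) : Prop where
  mapsTo : MapsTo f (compactUnitSphere H₁ K₁) (compactUnitSphere H₂ K₂)
  surjOn : SurjOn f (compactUnitSphere H₁ K₁) (compactUnitSphere H₂ K₂)
  norm_sub_eq : ∀ x ∈ compactUnitSphere H₁ K₁, ∀ y ∈ compactUnitSphere H₁ K₁,
    ‖f x - f y‖ = ‖x - y‖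

namespace IsSphereIsometry

variable {f : (H₁ →L[ℂ] K₁) → (H₂ →L[ℂ] K₂)} (hf : IsSphereIsometry f)
include hf

theorem forall_norm_sub_le_one {ι : Type*} {a : ι → H₁ →L[ℂ] K₁}
    (ha : ∀ i, a i ∈ compactUnitSphere H₁ K₁) {c : H₁ →L[ℂ] K₁} (hc : c ∈ compactUnitSphere H₁ K₁)
    (h : ∀ x ∈ compactUnitSphere H₁ K₁, (∀ i, ‖x - a i‖ = 2) → ‖c - x‖ ≤ 1) :
    ∀ y ∈ compactUnitSphere H₂ K₂, (∀ i, ‖y - f (a i)‖ = 2) → ‖f c - y‖ ≤ 1 := by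
  intro y hy hya
  obtain ⟨x, hx, rfl⟩ := hf.surjOn hy
  rw [hf.norm_sub_eq c hc x hx]
  exact h x hx fun i => hf.norm_sub_eq x hx (a i) (ha i) ▸ hya i

variable [CompleteSpace H₁] [CompleteSpace K₁] [CompleteSpace H₂] [CompleteSpace K₂]

theorem map_rankOne {ξ : H₁} {η : K₁} (hξ : ‖ξ‖ = 1) (hη : ‖η‖ = 1) :
    (∃ (ξ' : H₂) (η' : K₂), ‖ξ'‖ = 1 ∧ ‖η'‖ = 1 ∧ f (rankOne ℂ η ξ) = rankOne ℂ η' ξ') ∧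
      f (-rankOne ℂ η ξ) = -f (rankOne ℂ η ξ) := by
  have he := rankOne_mem_compactUnitSphere hξ hη
  have hne := neg_mem_compactUnitSphere he
  have hcenter x (hx : x ∈ compactUnitSphere H₁ K₁) (h : ‖x - -rankOne ℂ η ξ‖ = 2) :
      ‖rankOne ℂ η ξ - x‖ ≤ 1 := by
    simpa using norm_neg_rankOne_sub_le_of_norm_sub_eq_two hξ (η := -η) (by simp [hη]) hx
      (by simpa using h)
  refine eq_neg_of_forall_norm_sub_le (hf.mapsTo hne) (hf.mapsTo he) ?_ (fun w hw h => ?_)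
    (fun w hw h => ?_)
  · rw [hf.norm_sub_eq _ hne _ he, ← neg_add', norm_neg, ← two_smul ℂ, norm_smul, he.2]
    norm_num
  · exact hf.forall_norm_sub_le_one (a := fun _ : Unit => -rankOne ℂ η ξ) (fun _ => hne) he
      (fun x hx h' => hcenter x hx (h' ())) w hw fun _ => h
  · exact hf.forall_norm_sub_le_one (a := fun _ : Unit => rankOne ℂ η ξ) (fun _ => he) hne
      (fun x hx h' => norm_neg_rankOne_sub_le_of_norm_sub_eq_two hξ hη hx (h' ())) w hw fun _ => h

theorem exists_map_rankOne_orthonormal {ι : Type*} {ξ : ι → H₁} {η : ι → K₁}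
    (hξ : Orthonormal ℂ ξ) (hη : Orthonormal ℂ η) :
    ∃ (ξ' : ι → H₂) (η' : ι → K₂), Orthonormal ℂ ξ' ∧ Orthonormal ℂ η' ∧
      ∀ i, f (rankOne ℂ (η i) (ξ i)) = rankOne ℂ (η' i) (ξ' i) ∧
        f (-rankOne ℂ (η i) (ξ i)) = -rankOne ℂ (η' i) (ξ' i) := by
  choose ξ' η' hξ' hη' hfe using fun i => (hf.map_rankOne (hξ.1 i) (hη.1 i)).1
  have hneg i := (hf.map_rankOne (hξ.1 i) (hη.1 i)).2
  have he i := rankOne_mem_compactUnitSphere (hξ.1 i) (hη.1 i)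
  have hpair : ∀ i j, i ≠ j → ⟪ξ' i, ξ' j⟫_ℂ = 0 ∧ ⟪η' i, η' j⟫_ℂ = 0 := fun i j hij => by
    refine orthogonal_of_norm_rankOne_sub_le_of_norm_rankOne_add_le (hξ' i) (hη' i) (hξ' j)
      (hη' j) ?_ ?_
    · rw [← hfe i, ← hfe j, hf.norm_sub_eq _ (he i) _ (he j)]
      simpa [sub_eq_add_neg] using norm_rankOne_add_rankOne_le (hξ.1 i) (hη.1 i) (hξ.1 j)
        (η' := -η j) (by simp [hη.1 j]) (hξ.2 hij.symm) (by simp [hη.2 hij.symm])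
    · rw [← hfe i, ← hfe j, ← sub_neg_eq_add, ← hneg j,
        hf.norm_sub_eq _ (he i) _ (neg_mem_compactUnitSphere (he j)), sub_neg_eq_add]
      exact norm_rankOne_add_rankOne_le (hξ.1 i) (hη.1 i) (hξ.1 j) (hη.1 j) (hξ.2 hij.symm)
        (hη.2 hij.symm)
  refine ⟨ξ', η', ⟨hξ', fun _ _ hij => (hpair _ _ hij).1⟩, ⟨hη', fun _ _ hij => (hpair _ _ hij).2⟩,
    fun i => ⟨hfe i, by rw [hneg i, hfe i]⟩⟩

theorem map_neg_sum_rankOne {ι : Type*} [Fintype ι] [Nonempty ι] {ξ : ι → H₁} {η : ι → K₁}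
    {ξ' : ι → H₂} {η' : ι → K₂} (hξ : Orthonormal ℂ ξ) (hη : Orthonormal ℂ η)
    (hξ' : Orthonormal ℂ ξ') (hη' : Orthonormal ℂ η')
    (hfe : ∀ i, f (rankOne ℂ (η i) (ξ i)) = rankOne ℂ (η' i) (ξ' i)) :
    f (-∑ i, rankOne ℂ (η i) (ξ i)) = -∑ i, rankOne ℂ (η' i) (ξ' i) := by
  have he i := rankOne_mem_compactUnitSphere (hξ.1 i) (hη.1 i)
  set X := -∑ i, rankOne ℂ (η i) (ξ i)
  have hX : X ∈ compactUnitSphere H₁ K₁ :=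
    neg_mem_compactUnitSphere (sum_rankOne_mem_compactUnitSphere hξ hη)
  have hXξ i : X (ξ i) = -η i := by rw [neg_apply, sum_rankOne_apply_of_orthonormal hξ]
  have hcenter : ∀ x ∈ compactUnitSphere H₁ K₁, (∀ i, ‖x - rankOne ℂ (η i) (ξ i)‖ = 2) →
      ‖X - x‖ ≤ 1 := fun x hx h => by
    have hX' : X = ∑ i, rankOne ℂ (-η i) (ξ i) := by simp [X]
    rw [norm_sub_rev, hX']
    exact norm_sub_sum_rankOne_le hξ hx.2.le fun i =>
      (norm_sub_rankOne_eq_two_iff (hξ.1 i) (hη.1 i) hx.1 hx.2.le).mp (h i)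
  have hfX := hf.mapsTo hX
  have hfXξ i : f X (ξ' i) = -η' i := by
    refine (norm_sub_rankOne_eq_two_iff (hξ'.1 i) (hη'.1 i) hfX.1 hfX.2.le).mp ?_
    rw [← hfe i, hf.norm_sub_eq _ hX _ (he i)]
    exact (norm_sub_rankOne_eq_two_iff (hξ.1 i) (hη.1 i) hX.1 hX.2.le).mpr (hXξ i)
  -- `f X` lies in the face `{y | ∀ i, y (ξ' i) = -η' i}` and is within `1` of all of it
  rw [eq_sum_rankOne_of_forall_norm_sub_le hξ' hη'.neg hfX.2.le hfXξ
    fun y hy hy1 hyξ => hf.forall_norm_sub_le_one he hX hcenter y ⟨hy, hy1⟩ fun i => by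
      rw [hfe i]
      exact (norm_sub_rankOne_eq_two_iff (hξ'.1 i) (hη'.1 i) hy hy1.le).mpr (hyξ i)]
  simp

theorem exists_map_sum_rankOne {ι : Type*} [Fintype ι] [Nonempty ι] {ξ : ι → H₁} {η : ι → K₁}
    (hξ : Orthonormal ℂ ξ) (hη : Orthonormal ℂ η) :
    ∃ (ξ' : ι → H₂) (η' : ι → K₂), Orthonormal ℂ ξ' ∧ Orthonormal ℂ η' ∧
      (∀ i, f (rankOne ℂ (η i) (ξ i)) = rankOne ℂ (η' i) (ξ' i)) ∧
      f (∑ i, rankOne ℂ (η i) (ξ i)) = ∑ i, rankOne ℂ (η' i) (ξ' i) ∧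
      f (-∑ i, rankOne ℂ (η i) (ξ i)) = -∑ i, rankOne ℂ (η' i) (ξ' i) := by
  obtain ⟨ξ', η', hξ', hη', hfe⟩ := hf.exists_map_rankOne_orthonormal hξ hη
  refine ⟨ξ', η', hξ', hη', fun i => (hfe i).1, ?_,
    hf.map_neg_sum_rankOne hξ hη hξ' hη' fun i => (hfe i).1⟩
  -- the sum is the negative of the sum for the family `-η`
  simpa using hf.map_neg_sum_rankOne hξ hη.neg hξ' hη'.neg fun i => by simpa using (hfe i).2

end IsSphereIsometry

end SphereIsometry

section PartialIsometries

variable {H K : Type*}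
  [NormedAddCommGroup H] [InnerProductSpace ℂ H] [CompleteSpace H]
  [NormedAddCommGroup K] [InnerProductSpace ℂ K] [CompleteSpace K]

theorem IsPartialIsom.exists_eq_sum_rankOne {e : H →L[ℂ] K} (he : IsPartialIsom e)
    [FiniteDimensional ℂ (LinearMap.range (e : H →ₗ[ℂ] K))] :
    ∃ (n : ℕ) (ξ : Fin n → H) (η : Fin n → K), n = finrank ℂ (LinearMap.range (e : H →ₗ[ℂ] K)) ∧
      Orthonormal ℂ ξ ∧ Orthonormal ℂ η ∧ e = ∑ i, rankOne ℂ (η i) (ξ i) := by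
  set V := LinearMap.range (e : H →ₗ[ℂ] K)
  set b := stdOrthonormalBasis ℂ V
  have hfix : ∀ y ∈ V, e (adjoint e y) = y := by
    rintro _ ⟨z, rfl⟩
    exact congrArg (· z) he
  have hη : Orthonormal ℂ fun i => (b i : K) := b.orthonormal.comp_linearIsometry V.subtypeₗᵢ
  refine ⟨_, fun i => adjoint e (b i), fun i => b i, rfl, ?_, hη, ?_⟩
  · rw [orthonormal_iff_ite] at hη ⊢
    intro i j
    rw [adjoint_inner_left, hfix _ (b j).2, hη]
  · ext x
    have := congrArg Subtype.val (b.sum_repr' ⟨e x, LinearMap.mem_range_self _ x⟩)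
    simpa [adjoint_inner_left] using this.symm

theorem IsPartialIsom.exists_eq_rankOne {e : H →L[ℂ] K} (he : IsPartialIsom e)
    (hrank : finrank ℂ (LinearMap.range (e : H →ₗ[ℂ] K)) = 1) :
    ∃ (ξ : H) (η : K), ‖ξ‖ = 1 ∧ ‖η‖ = 1 ∧ e = rankOne ℂ η ξ := by
  have := Module.finite_of_finrank_eq_succ hrank
  obtain ⟨n, ξ, η, hn, hξ, hη, rfl⟩ := he.exists_eq_sum_rankOne
  obtain rfl : n = 1 := hn.trans hrank
  exact ⟨ξ 0, η 0, hξ.1 0, hη.1 0, Fin.sum_univ_one _⟩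

theorem isPartialIsom_rankOne {ξ : H} {η : K} (hξ : ‖ξ‖ = 1) (hη : ‖η‖ = 1) :
    IsPartialIsom (rankOne ℂ η ξ) := by
  simp [IsPartialIsom, comp_rankOne, inner_self_eq_norm_sq_to_K, hξ, hη]

theorem orthogonalOps_rankOne_iff {ξ ξ' : H} {η η' : K} (hξ : ξ ≠ 0) (hη : η ≠ 0) (hξ' : ξ' ≠ 0)
    (hη' : η' ≠ 0) :
    OrthogonalOps (rankOne ℂ η ξ) (rankOne ℂ η' ξ') ↔ ⟪ξ, ξ'⟫_ℂ = 0 ∧ ⟪η', η⟫_ℂ = 0 := by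
  simp [OrthogonalOps, rankOne_comp_rankOne, hξ, hη, hξ', hη']

theorem exists_orthonormal_eq_rankOne_of_pairwise_orthogonalOps {ι : Type*}
    {e : ι → H →L[ℂ] K} (he : ∀ i, IsPartialIsom (e i))
    (hrank : ∀ i, finrank ℂ (LinearMap.range (e i : H →ₗ[ℂ] K)) = 1)
    (horth : ∀ i j, i ≠ j → OrthogonalOps (e i) (e j)) :
    ∃ (ξ : ι → H) (η : ι → K), Orthonormal ℂ ξ ∧ Orthonormal ℂ η ∧
      e = fun i => rankOne ℂ (η i) (ξ i) := by
  choose ξ η hξ hη he using fun i => (he i).exists_eq_rankOne (hrank i)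
  obtain rfl : e = fun i => rankOne ℂ (η i) (ξ i) := funext he
  have hξ0 i : ξ i ≠ 0 := by rintro h; simpa [h] using hξ i
  have hη0 i : η i ≠ 0 := by rintro h; simpa [h] using hη i
  have horth' i j (hij : i ≠ j) :=
    (orthogonalOps_rankOne_iff (hξ0 i) (hη0 i) (hξ0 j) (hη0 j)).mp (horth i j hij)
  exact ⟨ξ, η, ⟨hξ, fun i j hij => (horth' i j hij).1⟩,
    ⟨hη, fun i j hij => (horth' j i hij.symm).2⟩, rfl⟩

end PartialIsometries

/-- A surjective isometry between the unit spheres of two spaces of compact operators sends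
`-e` to `-f(e)` for every norm-one finite-rank partial isometry `e`, maps mutually orthogonal
rank-one partial isometries to mutually orthogonal rank-one partial isometries, and is
additive on them. -/
theorem surjective_isometry_preserves_orthogonal_tripotents
    {H₁ K₁ H₂ K₂ : Type*}
    [NormedAddCommGroup H₁] [InnerProductSpace ℂ H₁] [CompleteSpace H₁]
    [NormedAddCommGroup K₁] [InnerProductSpace ℂ K₁] [CompleteSpace K₁]
    [NormedAddCommGroup H₂] [InnerProductSpace ℂ H₂] [CompleteSpace H₂]
    [NormedAddCommGroup K₂] [InnerProductSpace ℂ K₂] [CompleteSpace K₂]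
    (f : (H₁ →L[ℂ] K₁) → (H₂ →L[ℂ] K₂))
    (hmap : ∀ x : H₁ →L[ℂ] K₁, IsCompactOperator x → ‖x‖ = 1 →
      IsCompactOperator (f x) ∧ ‖f x‖ = 1)
    (hsurj : ∀ y : H₂ →L[ℂ] K₂, IsCompactOperator y → ‖y‖ = 1 →
      ∃ x : H₁ →L[ℂ] K₁, IsCompactOperator x ∧ ‖x‖ = 1 ∧ f x = y)
    (hiso : ∀ x y : H₁ →L[ℂ] K₁, IsCompactOperator x → ‖x‖ = 1 →
      IsCompactOperator y → ‖y‖ = 1 → ‖f x - f y‖ = ‖x - y‖) :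
    (∀ e : H₁ →L[ℂ] K₁, IsCompactOperator e → IsPartialIsom e →
      FiniteDimensional ℂ (LinearMap.range (e : H₁ →ₗ[ℂ] K₁)) → ‖e‖ = 1 → f (-e) = -f e) ∧
    (∀ m : ℕ, 0 < m → ∀ e : Fin m → (H₁ →L[ℂ] K₁),
      (∀ i, IsPartialIsom (e i)) →
      (∀ i, Module.finrank ℂ (LinearMap.range (e i : H₁ →ₗ[ℂ] K₁)) = 1) →
      (∀ i j, i ≠ j → OrthogonalOps (e i) (e j)) →
      (∀ i, IsPartialIsom (f (e i)) ∧
        Module.finrank ℂ (LinearMap.range (f (e i) : H₂ →ₗ[ℂ] K₂)) = 1) ∧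
      (∀ i j, i ≠ j → OrthogonalOps (f (e i)) (f (e j))) ∧
      f (∑ i, e i) = ∑ i, f (e i)) := by
  have hf : IsSphereIsometry f := by
    refine ⟨fun x hx => hmap x hx.1 hx.2, fun y hy => ?_,
      fun x hx y hy => hiso x y hx.1 hx.2 hy.1 hy.2⟩
    obtain ⟨x, hxc, hx1, rfl⟩ := hsurj y hy.1 hy.2
    exact ⟨x, ⟨hxc, hx1⟩, rfl⟩
  refine ⟨fun e _ he _ he1 => ?_, fun m hm e he hrank horth => ?_⟩
  · obtain ⟨n, ξ, η, -, hξ, hη, rfl⟩ := he.exists_eq_sum_rankOne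
    have : Nonempty (Fin n) :=
      Fin.pos_iff_nonempty.mp (Nat.pos_of_ne_zero (by rintro rfl; simp at he1))
    obtain ⟨_, _, _, _, _, hsum, hneg⟩ := hf.exists_map_sum_rankOne hξ hη
    rw [hneg, hsum]
  · obtain ⟨ξ, η, hξ, hη, rfl⟩ :=
      exists_orthonormal_eq_rankOne_of_pairwise_orthogonalOps he hrank horth
    have : Nonempty (Fin m) := Fin.pos_iff_nonempty.mp hm
    obtain ⟨ξ', η', hξ', hη', hfe, hsum, -⟩ := hf.exists_map_sum_rankOne hξ hη
    refine ⟨fun i => ?_, fun i j hij => ?_, by simp only [hfe, hsum]⟩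
    · rw [hfe i]
      exact ⟨isPartialIsom_rankOne (hξ'.1 i) (hη'.1 i),
        finrank_range_rankOne (hξ'.ne_zero i) (hη'.ne_zero i)⟩
    · rw [hfe i, hfe j, orthogonalOps_rankOne_iff (hξ'.ne_zero i) (hη'.ne_zero i)
        (hξ'.ne_zero j) (hη'.ne_zero j)]
      exact ⟨hξ'.2 hij, hη'.2 hij.symm⟩
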